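/- arXiv:1102.0268 — 2 statements merged into one kernel-verified Lean document; each statement's English description precedes it below -/
import Mathlib

section
/- (Lemma 3) For every formula B in the set Σ determined by a formula A, there exists a formula B* ∈ Γ such that the formula B ↔ B* is provable in IntGC. -/
/-- Formulas of IntGC over a countable set of propositional variables (indexed by ℕ),
with connectives ¬, →, ∨, ∧ and modal operators ◆ (`dia`) and ∇ (`nab`). -/
inductive Formula : Type
  | var : ℕ → Formula
  | and : Formula → Formula → Formula
  | or  : Formula → Formula → Formula
  | imp : Formula → Formula → Formula
  | neg : Formula → Formula
  | dia : Formula → Formula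
  | nab : Formula → Formula
  deriving DecidableEq

namespace Formula

/-- ⊤ := p → p for a fixed propositional variable. -/
def top : Formula := imp (var 0) (var 0)

/-- ⊥ := ¬⊤. -/
def bot : Formula := neg top

/-- A ↔ B as defined connective. -/
def iff (A B : Formula) : Formula := Formula.and (imp A B) (imp B A)

end Formula

open Formula

/-- Provability in IntGC: the smallest set of formulas containing all substitution
instances of intuitionistic propositional theorems (generated by a standard Hilbert-style
axiomatisation, given as schemes), closed under modus ponens and the rules (GC1), (GC2). -/
inductive Prov : Formula → Prop
  | ax1 (A B : Formula) : Prov (imp A (imp B A))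
  | ax2 (A B C : Formula) : Prov (imp (imp A (imp B C)) (imp (imp A B) (imp A C)))
  | ax3 (A B : Formula) : Prov (imp (Formula.and A B) A)
  | ax4 (A B : Formula) : Prov (imp (Formula.and A B) B)
  | ax5 (A B : Formula) : Prov (imp A (imp B (Formula.and A B)))
  | ax6 (A B : Formula) : Prov (imp A (Formula.or A B))
  | ax7 (A B : Formula) : Prov (imp B (Formula.or A B))
  | ax8 (A B C : Formula) : Prov (imp (imp A C) (imp (imp B C) (imp (Formula.or A B) C)))
  | ax9 (A B : Formula) : Prov (imp (imp A B) (imp (imp A (neg B)) (neg A)))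
  | ax10 (A B : Formula) : Prov (imp (neg A) (imp A B))
  | mp {A B : Formula} : Prov (imp A B) → Prov A → Prov B
  | gc1 {A B : Formula} : Prov (imp A (nab B)) → Prov (imp (dia A) B)
  | gc2 {A B : Formula} : Prov (imp (dia A) B) → Prov (imp A (nab B))

/-- Satisfaction for the Kripke semantics of IntGC, relative to raw frame data:
a preorder `le`, an accessibility relation `R`, and a valuation `v`. -/
def Sat {X : Type} (le R : X → X → Prop) (v : ℕ → X → Prop) : X → Formula → Prop
  | x, .var p => v p x
  | x, .and A B => Sat le R v x A ∧ Sat le R v x B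
  | x, .or A B => Sat le R v x A ∨ Sat le R v x B
  | x, .imp A B => ∀ y, le x y → Sat le R v y A → Sat le R v y B
  | x, .neg A => ∀ y, le x y → ¬ Sat le R v y A
  | x, .dia A => ∃ y, R x y ∧ Sat le R v y A
  | x, .nab A => ∀ y, R y x → Sat le R v y A

/-- An IntGC-model: a Kripke frame (nonempty carrier, preorder ≤, relation R satisfying
x ≥ y, y R z, z ≥ w ⟹ x R w) together with a valuation assigning ≤-upward-closed sets
to propositional variables. -/
structure KModel where
  X : Type
  ne : Nonempty X
  le : X → X → Prop
  le_refl : ∀ x, le x x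
  le_trans : ∀ x y z, le x y → le y z → le x z
  R : X → X → Prop
  frame : ∀ x y z w, le y x → R y z → le w z → R x w
  v : ℕ → X → Prop
  up : ∀ p x y, le x y → v p x → v p y

/-- Satisfaction in an IntGC-model. -/
def KModel.sat (M : KModel) (x : M.X) (B : Formula) : Prop := Sat M.le M.R M.v x B

/-- The set of subformulas of a formula (including the formula itself). -/
def Subf : Formula → Set Formula
  | .var p => {.var p}
  | .and A B => insert (.and A B) (Subf A ∪ Subf B)
  | .or A B => insert (.or A B) (Subf A ∪ Subf B)
  | .imp A B => insert (.imp A B) (Subf A ∪ Subf B)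
  | .neg A => insert (.neg A) (Subf A)
  | .dia A => insert (.dia A) (Subf A)
  | .nab A => insert (.nab A) (Subf A)

/-- Γ = Subf(A) ∪ {∇◆B : ◆B ∈ Subf(A)} ∪ {◆∇B : ∇B ∈ Subf(A)}. -/
def Gam (A : Formula) : Set Formula :=
  Subf A ∪ {F | ∃ B, dia B ∈ Subf A ∧ F = nab (dia B)}
        ∪ {F | ∃ B, nab B ∈ Subf A ∧ F = dia (nab B)}

/-- `ndIter n F` is (∇◆)ⁿ F. -/
def ndIter : ℕ → Formula → Formula
  | 0, F => F
  | n+1, F => nab (dia (ndIter n F))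

/-- `dnIter n F` is (◆∇)ⁿ F. -/
def dnIter : ℕ → Formula → Formula
  | 0, F => F
  | n+1, F => dia (nab (dnIter n F))

/-- Σ = Subf(A) ∪ {(∇◆)ⁿ∇B : ∇B ∈ Γ} ∪ {◆(∇◆)ⁿ∇B : ∇B ∈ Γ}
           ∪ {(◆∇)ⁿ◆B : ◆B ∈ Γ} ∪ {∇(◆∇)ⁿ◆B : ◆B ∈ Γ}. -/
def Sig (A : Formula) : Set Formula :=
  Subf A
  ∪ {F | ∃ n B, nab B ∈ Gam A ∧ F = ndIter n (nab B)}
  ∪ {F | ∃ n B, nab B ∈ Gam A ∧ F = dia (ndIter n (nab B))}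
  ∪ {F | ∃ n B, dia B ∈ Gam A ∧ F = dnIter n (dia B)}
  ∪ {F | ∃ n B, dia B ∈ Gam A ∧ F = nab (dnIter n (dia B))}

/-- The equivalence x ∼ y iff x and y satisfy exactly the same formulas of Σ. -/
def simSetoid (M : KModel) (A : Formula) : Setoid M.X :=
  ⟨fun x y => ∀ B ∈ Sig A, (M.sat x B ↔ M.sat y B),
   ⟨fun _ _ _ => Iff.rfl,
    fun h B hB => (h B hB).symm,
    fun h1 h2 B hB => (h1 B hB).trans (h2 B hB)⟩⟩

/-- [x] ≤^f [y] iff every formula of Σ satisfied at x is satisfied at y. -/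
def leF (M : KModel) (A : Formula) (a b : Quotient (simSetoid M A)) : Prop :=
  ∀ x y : M.X, Quotient.mk (simSetoid M A) x = a → Quotient.mk (simSetoid M A) y = b →
    ∀ B ∈ Sig A, M.sat x B → M.sat y B

/-- [x] R^f [y] iff for all B with ∇B ∈ Σ, y ⊨ ∇B implies x ⊨ B. -/
def RF (M : KModel) (A : Formula) (a b : Quotient (simSetoid M A)) : Prop :=
  ∀ x y : M.X, Quotient.mk (simSetoid M A) x = a → Quotient.mk (simSetoid M A) y = b →
    ∀ B : Formula, nab B ∈ Sig A → M.sat y (nab B) → M.sat x B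

/-- v^f(p) = {[x] : x ⊨ p} for propositional variables p ∈ Σ, and ∅ otherwise. -/
def vF (M : KModel) (A : Formula) (p : ℕ) (a : Quotient (simSetoid M A)) : Prop :=
  var p ∈ Sig A ∧ ∃ x : M.X, Quotient.mk (simSetoid M A) x = a ∧ M.sat x (var p)

lemma prov_id (A : Formula) : Prov (imp A A) :=
  Prov.mp (Prov.mp (Prov.ax2 A (imp A A) A) (Prov.ax1 A (imp A A))) (Prov.ax1 A A)

lemma prov_comp {A B C : Formula} (h1 : Prov (imp A B)) (h2 : Prov (imp B C)) :
    Prov (imp A C) :=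
  Prov.mp (Prov.mp (Prov.ax2 A B C) (Prov.mp (Prov.ax1 (imp B C) A) h2)) h1

lemma iff_intro {A B : Formula} (h1 : Prov (imp A B)) (h2 : Prov (imp B A)) :
    Prov (Formula.iff A B) :=
  Prov.mp (Prov.mp (Prov.ax5 (imp A B) (imp B A)) h1) h2

lemma iff_mp {A B : Formula} (h : Prov (Formula.iff A B)) : Prov (imp A B) :=
  Prov.mp (Prov.ax3 (imp A B) (imp B A)) h

lemma iff_mpr {A B : Formula} (h : Prov (Formula.iff A B)) : Prov (imp B A) :=
  Prov.mp (Prov.ax4 (imp A B) (imp B A)) h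

lemma iff_refl (A : Formula) : Prov (Formula.iff A A) :=
  iff_intro (prov_id A) (prov_id A)

lemma iff_trans {A B C : Formula} (h1 : Prov (Formula.iff A B))
    (h2 : Prov (Formula.iff B C)) : Prov (Formula.iff A C) :=
  iff_intro (prov_comp (iff_mp h1) (iff_mp h2)) (prov_comp (iff_mpr h2) (iff_mpr h1))

lemma prov_counit (B : Formula) : Prov (imp (dia (nab B)) B) :=
  Prov.gc1 (prov_id (nab B))

lemma prov_unit (B : Formula) : Prov (imp B (nab (dia B))) :=
  Prov.gc2 (prov_id (dia B))

lemma dia_mono {A B : Formula} (h : Prov (imp A B)) : Prov (imp (dia A) (dia B)) :=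
  Prov.gc1 (prov_comp h (prov_unit B))

lemma nab_mono {A B : Formula} (h : Prov (imp A B)) : Prov (imp (nab A) (nab B)) :=
  Prov.gc2 (prov_comp (prov_counit A) h)

lemma dia_cong {A B : Formula} (h : Prov (Formula.iff A B)) :
    Prov (Formula.iff (dia A) (dia B)) :=
  iff_intro (dia_mono (iff_mp h)) (dia_mono (iff_mpr h))

lemma nab_cong {A B : Formula} (h : Prov (Formula.iff A B)) :
    Prov (Formula.iff (nab A) (nab B)) :=
  iff_intro (nab_mono (iff_mp h)) (nab_mono (iff_mpr h))

/-- ⊢ ∇◆∇B ↔ ∇B. -/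
lemma nab_fix (B : Formula) : Prov (Formula.iff (nab (dia (nab B))) (nab B)) :=
  iff_intro (nab_mono (prov_counit B)) (prov_unit (nab B))

/-- ⊢ ◆∇◆B ↔ ◆B. -/
lemma dia_fix (B : Formula) : Prov (Formula.iff (dia (nab (dia B))) (dia B)) :=
  iff_intro (prov_counit (dia B)) (dia_mono (prov_unit B))

lemma nd_equiv (B : Formula) : ∀ n, Prov (Formula.iff (ndIter n (nab B)) (nab B))
  | 0 => iff_refl _
  | n+1 => iff_trans (nab_cong (dia_cong (nd_equiv B n))) (nab_fix B)

lemma dn_equiv (B : Formula) : ∀ n, Prov (Formula.iff (dnIter n (dia B)) (dia B))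
  | 0 => iff_refl _
  | n+1 => iff_trans (dia_cong (nab_cong (dn_equiv B n))) (dia_fix B)

lemma subf_subset_gam (A : Formula) : Subf A ⊆ Gam A := fun B hB =>
  Or.inl (Or.inl hB)

lemma nab_mem_gam {A B : Formula} (h : nab B ∈ Gam A) :
    nab B ∈ Subf A ∨ ∃ C, dia C ∈ Subf A ∧ B = dia C := by
  rcases h with (h | ⟨C, hC, hEq⟩) | ⟨C, hC, hEq⟩
  · exact Or.inl h
  · exact Or.inr ⟨C, hC, by injection hEq⟩
  · cases hEq

lemma dia_mem_gam {A B : Formula} (h : dia B ∈ Gam A) :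
    dia B ∈ Subf A ∨ ∃ C, nab C ∈ Subf A ∧ B = nab C := by
  rcases h with (h | ⟨C, hC, hEq⟩) | ⟨C, hC, hEq⟩
  · exact Or.inl h
  · cases hEq
  · exact Or.inr ⟨C, hC, by injection hEq⟩

/-- (Lemma 3): every B ∈ Σ is provably equivalent to some formula B* ∈ Γ. -/
theorem sigma_equiv_gamma (A : Formula) :
    ∀ B ∈ Sig A, ∃ Bs ∈ Gam A, Prov (Formula.iff B Bs) := by
  intro B hB
  rcases hB with (((hB | ⟨n, C, hC, rfl⟩) | ⟨n, C, hC, rfl⟩) | ⟨n, C, hC, rfl⟩) | ⟨n, C, hC, rfl⟩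
  · exact ⟨B, subf_subset_gam A hB, iff_refl B⟩
  · -- (∇◆)ⁿ∇C ↔ ∇C
    exact ⟨nab C, hC, nd_equiv C n⟩
  · -- ◆(∇◆)ⁿ∇C ↔ ◆∇C
    rcases nab_mem_gam hC with h | ⟨D, hD, rfl⟩
    · exact ⟨dia (nab C), Or.inr ⟨C, h, rfl⟩, dia_cong (nd_equiv C n)⟩
    · exact ⟨dia D, subf_subset_gam A hD,
        iff_trans (dia_cong (nd_equiv (dia D) n)) (dia_fix D)⟩
  · -- (◆∇)ⁿ◆C ↔ ◆C
    exact ⟨dia C, hC, dn_equiv C n⟩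
  · -- ∇(◆∇)ⁿ◆C ↔ ∇◆C
    rcases dia_mem_gam hC with h | ⟨D, hD, rfl⟩
    · exact ⟨nab (dia C), Or.inl (Or.inr ⟨C, h, rfl⟩), nab_cong (dn_equiv C n)⟩
    · exact ⟨nab D, subf_subset_gam A hD,
        iff_trans (nab_cong (dn_equiv (nab D) n)) (nab_fix D)⟩
end

section
/- (Lemma 8, Filtration Lemma) Let M = (X,≤,R,v) be an IntGC-model, A a formula, and M^f = (X/∼, ≤^f, R^f, v^f) the filtration of M through Σ. Then for every formula B ∈ Σ and every x ∈ X: x ⊨ B in M if and only if [x] ⊨ B in M^f. -/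
open Formula

lemma mem_subf_self : ∀ F : Formula, F ∈ Subf F := by
  intro F; cases F <;> simp [Subf]

lemma subf_subset : ∀ G F : Formula, F ∈ Subf G → Subf F ⊆ Subf G := by
  intro G
  induction G with
  | var p =>
      intro F hF
      simp only [Subf, Set.mem_singleton_iff] at hF
      subst hF; exact subset_rfl
  | and B C ihB ihC =>
      intro F hF
      simp only [Subf, Set.mem_insert_iff, Set.mem_union] at hF
      rcases hF with rfl | hF | hF
      · exact subset_rfl
      · exact (ihB F hF).trans (by intro x hx; simp only [Subf, Set.mem_insert_iff, Set.mem_union]; tauto)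
      · exact (ihC F hF).trans (by intro x hx; simp only [Subf, Set.mem_insert_iff, Set.mem_union]; tauto)
  | or B C ihB ihC =>
      intro F hF
      simp only [Subf, Set.mem_insert_iff, Set.mem_union] at hF
      rcases hF with rfl | hF | hF
      · exact subset_rfl
      · exact (ihB F hF).trans (by intro x hx; simp only [Subf, Set.mem_insert_iff, Set.mem_union]; tauto)
      · exact (ihC F hF).trans (by intro x hx; simp only [Subf, Set.mem_insert_iff, Set.mem_union]; tauto)
  | imp B C ihB ihC =>
      intro F hF
      simp only [Subf, Set.mem_insert_iff, Set.mem_union] at hF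
      rcases hF with rfl | hF | hF
      · exact subset_rfl
      · exact (ihB F hF).trans (by intro x hx; simp only [Subf, Set.mem_insert_iff, Set.mem_union]; tauto)
      · exact (ihC F hF).trans (by intro x hx; simp only [Subf, Set.mem_insert_iff, Set.mem_union]; tauto)
  | neg B ihB =>
      intro F hF
      simp only [Subf, Set.mem_insert_iff] at hF
      rcases hF with rfl | hF
      · exact subset_rfl
      · exact (ihB F hF).trans (by intro x hx; simp only [Subf, Set.mem_insert_iff]; tauto)
  | dia B ihB =>
      intro F hF
      simp only [Subf, Set.mem_insert_iff] at hF
      rcases hF with rfl | hF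
      · exact subset_rfl
      · exact (ihB F hF).trans (by intro x hx; simp only [Subf, Set.mem_insert_iff]; tauto)
  | nab B ihB =>
      intro F hF
      simp only [Subf, Set.mem_insert_iff] at hF
      rcases hF with rfl | hF
      · exact subset_rfl
      · exact (ihB F hF).trans (by intro x hx; simp only [Subf, Set.mem_insert_iff]; tauto)

/-- From `G ∈ Subf A` and `F ∈ Subf G` conclude `F ∈ Subf A`. -/
lemma subf_trans {A G F : Formula} (hG : G ∈ Subf A) (hF : F ∈ Subf G) : F ∈ Subf A :=
  subf_subset A G hG hF

lemma mem_sig1 {A F : Formula} (h : F ∈ Subf A) : F ∈ Sig A := by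
  simp only [Sig, Set.mem_union]; tauto

lemma mem_sig2 {A D : Formula} (n : ℕ) (h : nab D ∈ Gam A) : ndIter n (nab D) ∈ Sig A := by
  simp only [Sig, Set.mem_union, Set.mem_setOf_eq]
  exact Or.inl (Or.inl (Or.inl (Or.inr ⟨n, D, h, rfl⟩)))

lemma mem_sig3 {A D : Formula} (n : ℕ) (h : nab D ∈ Gam A) :
    dia (ndIter n (nab D)) ∈ Sig A := by
  simp only [Sig, Set.mem_union, Set.mem_setOf_eq]
  exact Or.inl (Or.inl (Or.inr ⟨n, D, h, rfl⟩))

lemma mem_sig4 {A D : Formula} (n : ℕ) (h : dia D ∈ Gam A) : dnIter n (dia D) ∈ Sig A := by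
  simp only [Sig, Set.mem_union, Set.mem_setOf_eq]
  exact Or.inl (Or.inr ⟨n, D, h, rfl⟩)

lemma mem_sig5 {A D : Formula} (n : ℕ) (h : dia D ∈ Gam A) :
    nab (dnIter n (dia D)) ∈ Sig A := by
  simp only [Sig, Set.mem_union, Set.mem_setOf_eq]
  exact Or.inr ⟨n, D, h, rfl⟩

lemma mem_gam1 {A F : Formula} (h : F ∈ Subf A) : F ∈ Gam A := by
  simp only [Gam, Set.mem_union]; tauto

lemma gam_nab {A D : Formula} (h : nab D ∈ Gam A) : D ∈ Subf A := by
  simp only [Gam, Set.mem_union, Set.mem_setOf_eq] at h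
  rcases h with (h | ⟨B, hB, hEq⟩) | ⟨B, hB, hEq⟩
  · exact subf_trans h (by simp [Subf, mem_subf_self])
  · cases hEq; exact hB
  · exact absurd hEq (by simp)

lemma gam_dia {A D : Formula} (h : dia D ∈ Gam A) : D ∈ Subf A := by
  simp only [Gam, Set.mem_union, Set.mem_setOf_eq] at h
  rcases h with (h | ⟨B, hB, hEq⟩) | ⟨B, hB, hEq⟩
  · exact subf_trans h (by simp [Subf, mem_subf_self])
  · exact absurd hEq (by simp)
  · cases hEq; exact hB

/-- Non-modal formulas of Σ lie in Subf A. -/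
lemma sig_nonmodal {A F : Formula} (hF : F ∈ Sig A)
    (h1 : ∀ B, F ≠ dia B) (h2 : ∀ B, F ≠ nab B) : F ∈ Subf A := by
  simp only [Sig, Set.mem_union, Set.mem_setOf_eq] at hF
  rcases hF with (((h | ⟨n, D, _, rfl⟩) | ⟨n, D, _, rfl⟩) | ⟨n, D, _, rfl⟩) | ⟨n, D, _, rfl⟩
  · exact h
  · cases n with
    | zero => exact absurd rfl (h2 D)
    | succ m => exact absurd rfl (h2 _)
  · exact absurd rfl (h1 _)
  · cases n with
    | zero => exact absurd rfl (h1 D)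
    | succ m => exact absurd rfl (h1 _)
  · exact absurd rfl (h2 _)

lemma sig_and {A B C : Formula} (h : Formula.and B C ∈ Sig A) : B ∈ Sig A ∧ C ∈ Sig A := by
  have hs := sig_nonmodal h (by simp) (by simp)
  exact ⟨mem_sig1 (subf_trans hs (by simp [Subf, mem_subf_self])),
         mem_sig1 (subf_trans hs (by simp [Subf, mem_subf_self]))⟩

lemma sig_or {A B C : Formula} (h : Formula.or B C ∈ Sig A) : B ∈ Sig A ∧ C ∈ Sig A := by
  have hs := sig_nonmodal h (by simp) (by simp)
  exact ⟨mem_sig1 (subf_trans hs (by simp [Subf, mem_subf_self])),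
         mem_sig1 (subf_trans hs (by simp [Subf, mem_subf_self]))⟩

lemma sig_imp {A B C : Formula} (h : Formula.imp B C ∈ Sig A) : B ∈ Sig A ∧ C ∈ Sig A := by
  have hs := sig_nonmodal h (by simp) (by simp)
  exact ⟨mem_sig1 (subf_trans hs (by simp [Subf, mem_subf_self])),
         mem_sig1 (subf_trans hs (by simp [Subf, mem_subf_self]))⟩

lemma sig_neg {A B : Formula} (h : Formula.neg B ∈ Sig A) : B ∈ Sig A := by
  have hs := sig_nonmodal h (by simp) (by simp)
  exact mem_sig1 (subf_trans hs (by simp [Subf, mem_subf_self]))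

lemma sig_nab {A B : Formula} (h : nab B ∈ Sig A) : B ∈ Sig A := by
  simp only [Sig, Set.mem_union, Set.mem_setOf_eq] at h
  rcases h with (((h | ⟨n, D, hD, hEq⟩) | ⟨n, D, hD, hEq⟩) | ⟨n, D, hD, hEq⟩) | ⟨n, D, hD, hEq⟩
  · exact mem_sig1 (subf_trans h (by simp [Subf, mem_subf_self]))
  · cases n with
    | zero =>
        simp only [ndIter] at hEq; cases hEq
        exact mem_sig1 (gam_nab hD)
    | succ m =>
        simp only [ndIter] at hEq; cases hEq
        exact mem_sig3 m hD
  · exact absurd hEq (by simp)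
  · cases n with
    | zero => exact absurd hEq (by simp [dnIter])
    | succ m => exact absurd hEq (by simp [dnIter])
  · cases hEq
    exact mem_sig4 n hD

lemma sig_dia {A B : Formula} (h : dia B ∈ Sig A) : B ∈ Sig A ∧ nab (dia B) ∈ Sig A := by
  simp only [Sig, Set.mem_union, Set.mem_setOf_eq] at h
  rcases h with (((h | ⟨n, D, hD, hEq⟩) | ⟨n, D, hD, hEq⟩) | ⟨n, D, hD, hEq⟩) | ⟨n, D, hD, hEq⟩
  · refine ⟨mem_sig1 (subf_trans h (by simp [Subf, mem_subf_self])), ?_⟩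
    have : dia B ∈ Gam A := mem_gam1 h
    exact mem_sig5 0 this
  · cases n with
    | zero => exact absurd hEq (by simp [ndIter])
    | succ m => exact absurd hEq (by simp [ndIter])
  · cases hEq
    exact ⟨mem_sig2 n hD, mem_sig2 (n + 1) hD⟩
  · cases n with
    | zero =>
        simp only [dnIter] at hEq; cases hEq
        exact ⟨mem_sig1 (gam_dia hD), mem_sig5 0 hD⟩
    | succ m =>
        simp only [dnIter] at hEq; cases hEq
        exact ⟨mem_sig5 m hD, mem_sig5 (m + 1) hD⟩
  · exact absurd hEq (by simp)

/-- Monotonicity of satisfaction along ≤. -/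
lemma sat_mono (M : KModel) : ∀ B : Formula, ∀ x y : M.X, M.le x y → M.sat x B → M.sat y B := by
  intro B
  induction B with
  | var p => intro x y hxy h; exact M.up p x y hxy h
  | and B C ihB ihC => intro x y hxy h; exact ⟨ihB x y hxy h.1, ihC x y hxy h.2⟩
  | or B C ihB ihC =>
      intro x y hxy h
      rcases h with h | h
      · exact Or.inl (ihB x y hxy h)
      · exact Or.inr (ihC x y hxy h)
  | imp B C ihB ihC =>
      intro x y hxy h z hz hB
      exact h z (M.le_trans x y z hxy hz) hB
  | neg B ihB =>
      intro x y hxy h z hz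
      exact h z (M.le_trans x y z hxy hz)
  | dia B ihB =>
      intro x y hxy h
      obtain ⟨z, hxz, hzB⟩ := h
      exact ⟨z, M.frame y x z z hxy hxz (M.le_refl z), hzB⟩
  | nab B ihB =>
      intro x y hxy h z hz
      exact h z (M.frame z z y x (M.le_refl z) hz hxy)

/-- (Lemma 8, Filtration Lemma): for every B ∈ Σ and x ∈ X,
x ⊨ B in M iff [x] ⊨ B in the filtration M^f = (X/∼, ≤^f, R^f, v^f). -/
theorem filtration_lemma (M : KModel) (A : Formula) :
    ∀ B ∈ Sig A, ∀ x : M.X,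
      M.sat x B ↔ Sat (leF M A) (RF M A) (vF M A) (Quotient.mk (simSetoid M A) x) B := by
  suffices h : ∀ B : Formula, ∀ x : M.X, B ∈ Sig A →
      (M.sat x B ↔ Sat (leF M A) (RF M A) (vF M A) (Quotient.mk (simSetoid M A) x) B) by
    intro B hB x; exact h B x hB
  intro B
  induction B with
  | var p =>
      intro x hB
      constructor
      · intro hx
        exact ⟨hB, x, rfl, hx⟩
      · rintro ⟨-, y, hy, hyp⟩
        have hsim : ∀ D ∈ Sig A, (M.sat y D ↔ M.sat x D) := Quotient.exact hy
        exact (hsim (var p) hB).mp hyp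
  | and B C ihB ihC =>
      intro x hB
      obtain ⟨h1, h2⟩ := sig_and hB
      exact and_congr (ihB x h1) (ihC x h2)
  | or B C ihB ihC =>
      intro x hB
      obtain ⟨h1, h2⟩ := sig_or hB
      exact or_congr (ihB x h1) (ihC x h2)
  | imp B C ihB ihC =>
      intro x hB
      obtain ⟨hBm, hCm⟩ := sig_imp hB
      constructor
      · intro hx a hle haB
        obtain ⟨y, rfl⟩ := Quotient.exists_rep a
        have hxy := hle x y rfl rfl
        have hyimp : M.sat y (imp B C) := hxy _ hB hx
        have hyB : M.sat y B := (ihB y hBm).mpr haB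
        exact (ihC y hCm).mp (hyimp y (M.le_refl y) hyB)
      · intro hx y hxy hyB
        have hleF : leF M A (Quotient.mk (simSetoid M A) x) (Quotient.mk (simSetoid M A) y) := by
          intro x' y' hx' hy' D hD hx'D
          have sx : ∀ D ∈ Sig A, (M.sat x' D ↔ M.sat x D) := Quotient.exact hx'
          have sy : ∀ D ∈ Sig A, (M.sat y' D ↔ M.sat y D) := Quotient.exact hy'
          exact (sy _ hD).mpr (sat_mono M D x y hxy ((sx _ hD).mp hx'D))
        exact (ihC y hCm).mpr (hx _ hleF ((ihB y hBm).mp hyB))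
  | neg B ihB =>
      intro x hB
      have hBm : B ∈ Sig A := sig_neg hB
      constructor
      · intro hx a hle haB
        obtain ⟨y, rfl⟩ := Quotient.exists_rep a
        have hxy := hle x y rfl rfl
        have hyneg : M.sat y (neg B) := hxy _ hB hx
        exact hyneg y (M.le_refl y) ((ihB y hBm).mpr haB)
      · intro hx y hxy hyB
        have hleF : leF M A (Quotient.mk (simSetoid M A) x) (Quotient.mk (simSetoid M A) y) := by
          intro x' y' hx' hy' D hD hx'D
          have sx : ∀ D ∈ Sig A, (M.sat x' D ↔ M.sat x D) := Quotient.exact hx'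
          have sy : ∀ D ∈ Sig A, (M.sat y' D ↔ M.sat y D) := Quotient.exact hy'
          exact (sy _ hD).mpr (sat_mono M D x y hxy ((sx _ hD).mp hx'D))
        exact hx _ hleF ((ihB y hBm).mp hyB)
  | dia B ihB =>
      intro x hB
      obtain ⟨hBm, hnd⟩ := sig_dia hB
      constructor
      · rintro ⟨y, hxy, hyB⟩
        refine ⟨Quotient.mk (simSetoid M A) y, ?_, (ihB y hBm).mp hyB⟩
        intro x' y' hx' hy' C hC hy'C
        have sx : ∀ D ∈ Sig A, (M.sat x' D ↔ M.sat x D) := Quotient.exact hx'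
        have sy : ∀ D ∈ Sig A, (M.sat y' D ↔ M.sat y D) := Quotient.exact hy'
        have hyNab : M.sat y (nab C) := (sy _ hC).mp hy'C
        exact (sx _ (sig_nab hC)).mpr (hyNab x hxy)
      · rintro ⟨a, hRF, haB⟩
        obtain ⟨y, rfl⟩ := Quotient.exists_rep a
        have hyB : M.sat y B := (ihB y hBm).mpr haB
        have hyNab : M.sat y (nab (dia B)) := fun z hz => ⟨y, hz, hyB⟩
        exact hRF x y rfl rfl (dia B) hnd hyNab
  | nab B ihB =>
      intro x hB
      have hBm : B ∈ Sig A := sig_nab hB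
      constructor
      · intro hx a hRa
        obtain ⟨z, rfl⟩ := Quotient.exists_rep a
        exact (ihB z hBm).mp (hRa z x rfl rfl B hB hx)
      · intro hx z hz
        refine (ihB z hBm).mpr (hx (Quotient.mk (simSetoid M A) z) ?_)
        intro z' x' hz' hx' C hC hx'C
        have sz : ∀ D ∈ Sig A, (M.sat z' D ↔ M.sat z D) := Quotient.exact hz'
        have sx : ∀ D ∈ Sig A, (M.sat x' D ↔ M.sat x D) := Quotient.exact hx'
        have hxNab : M.sat x (nab C) := (sx _ hC).mp hx'C
        exact (sz _ (sig_nab hC)).mpr (hxNab z hz)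
end
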